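/- arXiv:1805.10269 — 6 statements merged into one kernel-verified Lean document; each statement's English description precedes it below -/
import Mathlib

section
/- Let G be a graph constructed from a neighborhood sequence W_1,…,W_n (so each vertex k ≥ 2 is joined to exactly the vertices in W_k ⊆ [1,k-1], with W_k \ {k-1} ⊆ W_{k-1}). If {a,b} is an edge of G with a < b, then a is adjacent to every vertex c with a < c < b. -/
/-!
Membership in the neighbourhood sets is inherited downwards: if `x ∈ W (k + 1)` and `x < k`, then
either `x = a (k + 1) ∈ W k`, or `x` lies in the window `[k + 2 - q (k + 1), k]`, and
`q (k + 1) ≤ q k + 1` makes that window, minus its top vertex `k`, part of the window of `W k`.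
Iterating from `b` down to `c`, the lower endpoint `a` of an edge `ab` lies in `W c` for every `a < c < b`.
-/

/-- A neighborhood sequence for a non-leaping sequence `q`, on vertex set {1,…,n}. -/
structure NbhdSeq (n : ℕ) where
  q : ℕ → ℕ
  a : ℕ → ℕ
  W : ℕ → Finset ℕ
  hn : 2 ≤ n
  hq1 : q 1 = 0
  hq2 : q 2 = 1
  hq : ∀ k, 3 ≤ k → k ≤ n → 2 ≤ q k ∧ q k ≤ q (k - 1) + 1
  hW1 : W 1 = ∅
  hW2 : W 2 = {1}
  ha2 : a 2 = 1
  hWk : ∀ k, 3 ≤ k → k ≤ n → W k = insert (a k) (Finset.Icc (k - q k + 1) (k - 1))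
  hak : ∀ k, 3 ≤ k → k ≤ n → a k ∈ W (k - 1) ∧ a k < k - q k + 1

/-- The graph of a neighborhood sequence: vertex k is joined to every vertex of W k. -/
def NbhdSeq.graph {n : ℕ} (S : NbhdSeq n) : SimpleGraph ℕ where
  Adj i j := (i < j ∧ i ∈ S.W j) ∨ (j < i ∧ j ∈ S.W i)
  symm := ⟨fun i j h => Or.symm h⟩
  loopless := ⟨fun i h => by rcases h with ⟨h, -⟩ | ⟨h, -⟩ <;> exact lt_irrefl i h⟩

namespace NbhdSeq

variable {n : ℕ} (S : NbhdSeq n)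

theorem mem_W_of_mem_W_succ {k x : ℕ} (hkn : k + 1 ≤ n) (hx : x ∈ S.W (k + 1)) (hxk : x < k) :
    x ∈ S.W k := by
  obtain _ | _ | k := k
  · omega
  · simp only [zero_add, Nat.reduceAdd, S.hW2, Finset.mem_singleton] at hx
    omega
  rw [S.hWk (k + 3) (by omega) hkn, Finset.mem_insert, Finset.mem_Icc] at hx
  rcases hx with rfl | hx
  · exact (S.hak (k + 3) (by omega) hkn).1
  obtain _ | k := k
  · have hq : S.q 3 ≤ S.q 2 + 1 := (S.hq 3 le_rfl (by omega)).2
    rw [S.hq2] at hq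
    rw [zero_add] at hx
    omega
  · have hq : S.q (k + 1 + 3) ≤ S.q (k + 3) + 1 := (S.hq (k + 4) (by omega) (by omega)).2
    have hq' : 2 ≤ S.q (k + 3) := (S.hq (k + 3) (by omega) (by omega)).1
    rw [S.hWk (k + 3) (by omega) (by omega)]
    exact Finset.mem_insert_of_mem (Finset.mem_Icc.mpr (by omega))

theorem mem_W_of_lt_of_le {b c x : ℕ} (hbn : b ≤ n) (hx : x ∈ S.W b) (hxc : x < c) (hcb : c ≤ b) :
    x ∈ S.W c := by
  induction b with
  | zero => omega
  | succ b ih =>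
    rcases hcb.eq_or_lt with rfl | hcb
    · exact hx
    · exact ih (by omega) (S.mem_W_of_mem_W_succ hbn hx (by omega)) (by omega)

theorem graph_adj_iff_mem_W {i j : ℕ} (hij : i < j) : S.graph.Adj i j ↔ i ∈ S.W j := by
  simp [graph, hij, hij.not_gt]

end NbhdSeq

theorem stmt5_general {n : ℕ} (S : NbhdSeq n) (a b : ℕ) (hbn : b ≤ n)
    (hadj : S.graph.Adj a b) (c : ℕ) (hac : a < c) (hcb : c < b) :
    S.graph.Adj a c := by
  rw [S.graph_adj_iff_mem_W (hac.trans hcb)] at hadj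
  rw [S.graph_adj_iff_mem_W hac]
  exact S.mem_W_of_lt_of_le hbn hadj hac hcb.le

/-- in a graph built from a neighborhood sequence, if {a,b} is an
edge with a < b, then a is adjacent to every c with a < c < b. -/
theorem stmt5 {n : ℕ} (S : NbhdSeq n) (a b : ℕ) (hab : a < b) (hbn : b ≤ n)
    (hadj : S.graph.Adj a b) (c : ℕ) (hac : a < c) (hcb : c < b) :
    S.graph.Adj a c :=
  stmt5_general S a b hbn hadj c hac hcb
end

section
/- Let G be a graph on vertex set {1,…,n} with the property that whenever {a,b} is an edge with a < b, vertex a is adjacent to every c with a < c < b, and suppose G is connected. Then for any two vertices a < b, every vertex k lying on a shortest path from a to b satisfies k ≤ b. -/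
lemma stmt6_aux {n : ℕ} (G : SimpleGraph (Fin n)) (hG : G.Connected)
    (hdc : ∀ a b c : Fin n, G.Adj a b → a < c → c < b → G.Adj a c)
    (b : Fin n) :
    ∀ (a k : Fin n) (w : G.Walk a k), b < k → a ≤ b → G.dist a b ≤ w.length := by
  intro a k w
  induction w with
  | nil => intro hbk hab; exact absurd hbk (not_lt.mpr hab)
  | @cons u v _ huv w ih =>
    intro hbk hub
    by_cases hv : v ≤ b
    · have h1 : G.dist u v ≤ 1 := by
        have := G.dist_le huv.toWalk
        simpa using this
      calc G.dist u b ≤ G.dist u v + G.dist v b := hG.dist_triangle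
        _ ≤ 1 + w.length := by
            have := ih hbk hv
            omega
        _ = (SimpleGraph.Walk.cons huv w).length := by
            simp [SimpleGraph.Walk.length_cons]; omega
    · push_neg at hv
      rcases eq_or_lt_of_le hub with rfl | hub'
      · simp [SimpleGraph.dist_self]
      · have hadj : G.Adj u b := hdc u v b huv hub' hv
        have h1 : G.dist u b ≤ 1 := by
          have := G.dist_le hadj.toWalk
          simpa using this
        simp [SimpleGraph.Walk.length_cons]
        omega

/-- in a connected graph on {1,…,n} with the downward-closure
property (if {a,b} ∈ E with a < c < b then {a,c} ∈ E), every vertex on a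
shortest path between a and b (a < b) is at most b. -/
theorem stmt6 {n : ℕ} (G : SimpleGraph (Fin n)) (hG : G.Connected)
    (hdc : ∀ a b c : Fin n, G.Adj a b → a < c → c < b → G.Adj a c)
    (a b : Fin n) (hab : a < b) (p : G.Walk a b) (hp : p.length = G.dist a b) :
    ∀ k ∈ p.support, k ≤ b := by
  intro k hk
  by_contra h
  push_neg at h
  set q := p.takeUntil k hk with hq
  set r := p.dropUntil k hk with hr
  have hspec : p = q.append r := (p.take_spec hk).symm
  have hlen : q.length + r.length = p.length := by
    rw [hspec, SimpleGraph.Walk.length_append]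
  have h1 : G.dist a b ≤ q.length := stmt6_aux G hG hdc b a k q h hab.le
  have h2 : r.length ≠ 0 := by
    intro h0
    have : k = b := r.eq_of_length_eq_zero h0
    exact absurd (this ▸ h) (lt_irrefl b)
  omega
end

section
/- Let S_{ℓ,r} be the weighted seesaw graph: vertices 1 and 2 with weight 0, an edge {1,2}, a path of ℓ vertices each of weight -2 attached by one endpoint to vertex 2, and a path of r vertices each of weight -2 attached by one endpoint to vertex 2, all edges having weight 1. Then the determinant of its weighted adjacency matrix A(S_{ℓ,r}) equals (-1)^{1+ℓ+r} (1+ℓ)(1+r). -/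
/-- Entry (i,j) of the weighted adjacency matrix of the seesaw graph S_{ℓ,r}
(0-indexed): vertices 0,1 are the two weight-0 vertices joined by an edge;
vertices 2,…,ℓ+1 form the left weight-(-2) path attached to vertex 1;
vertices ℓ+2,…,ℓ+r+1 form the right weight-(-2) path attached to vertex 1.
All edges have weight 1. -/
def seesawEntry (l r i j : ℕ) : ℝ :=
  if i = j then (if i ≤ 1 then 0 else -2)
  else if (i = 0 ∧ j = 1) ∨ (j = 0 ∧ i = 1) then 1
  else if (i = 1 ∧ j = 2 ∧ 1 ≤ l) ∨ (j = 1 ∧ i = 2 ∧ 1 ≤ l) then 1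
  else if (i = 1 ∧ j = l + 2 ∧ 1 ≤ r) ∨ (j = 1 ∧ i = l + 2 ∧ 1 ≤ r) then 1
  else if (j = i + 1 ∧ 2 ≤ i ∧ i + 1 ≤ l + 1) ∨ (i = j + 1 ∧ 2 ≤ j ∧ j + 1 ≤ l + 1) then 1
  else if (j = i + 1 ∧ l + 2 ≤ i ∧ i + 1 ≤ l + r + 1) ∨
      (i = j + 1 ∧ l + 2 ≤ j ∧ j + 1 ≤ l + r + 1) then 1
  else 0

/-- The weighted adjacency matrix of the seesaw graph S_{ℓ,r}. -/
noncomputable def seesawMatrix (l r : ℕ) : Matrix (Fin (2 + l + r)) (Fin (2 + l + r)) ℝ :=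
  fun i j => seesawEntry l r (i : ℕ) (j : ℕ)

/-
Vertex 0 of the seesaw is a pendant vertex attached to the hub, vertex 1. Expanding the determinant
at a pendant vertex u with neighbour v gives
  det A(G) = w(u) det A(G - u) - w(u,v)^2 det A(G - u - v).
Here w(u) = 0, w(u,v) = 1, and G - u - v is the disjoint union of two paths with vertex weights -2,
whose weighted adjacency matrices are -C_ℓ and -C_r for the Cartan matrices C_k of type A_k. The
same expansion gives det C_k = 2 det C_(k-1) - det C_(k-2), hence det C_k = k + 1, and so
det A(S_{ℓ,r}) = -(-1)^ℓ (ℓ + 1) (-1)^r (r + 1).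
-/

namespace Matrix

variable {R : Type*} [CommRing R]

theorem det_eq_of_pendant_zero {n : ℕ} (M : Matrix (Fin (n + 2)) (Fin (n + 2)) R)
    (hrow : ∀ j : Fin n, M 0 j.succ.succ = 0) (hcol : ∀ i : Fin n, M i.succ.succ 0 = 0) :
    M.det = M 0 0 * (M.submatrix Fin.succ Fin.succ).det -
      M 0 1 * M 1 0 * ((M.submatrix Fin.succ Fin.succ).submatrix Fin.succ Fin.succ).det := by
  have hminor : (M.submatrix Fin.succ (Fin.succAbove 1)).det =
      M 1 0 * ((M.submatrix Fin.succ Fin.succ).submatrix Fin.succ Fin.succ).det := by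
    rw [det_succ_column_zero, Fin.sum_univ_succ]
    simp [hcol, Function.comp_def]
  rw [det_succ_row_zero, Fin.sum_univ_succ, Fin.sum_univ_succ]
  simp [hrow, hminor]
  ring

theorem det_of_fin_congr {m n : ℕ} (h : m = n) (f : ℕ → ℕ → R) :
    (of fun i j : Fin m => f i j).det = (of fun i j : Fin n => f i j).det := by
  subst h
  rfl

end Matrix

namespace CartanMatrix

open Matrix

theorem A_submatrix_succ (n : ℕ) : (A (n + 1)).submatrix Fin.succ Fin.succ = A n := by
  ext i j
  simp [A, Fin.ext_iff]

theorem A_det : ∀ n : ℕ, (A n).det = n + 1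
  | 0 => by simp
  | 1 => by simp [A_one]
  | n + 2 => by
    rw [det_eq_of_pendant_zero _ (fun j => by simp [A, Fin.ext_iff])
        (fun i => by simp [A, Fin.ext_iff]),
      A_submatrix_succ, A_submatrix_succ, A_det (n + 1), A_det n]
    simp [A]
    ring

theorem det_neg_map_A (R : Type*) [CommRing R] (n : ℕ) :
    (-(A n).map (Int.cast : ℤ → R)).det = (-1) ^ n * (n + 1) := by
  rw [det_neg, Fintype.card_fin, ← Int.cast_det, A_det]
  norm_num

end CartanMatrix

open Matrix CartanMatrix

theorem seesawEntry_add_two_eq_fromBlocks (l r : ℕ) :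
    (of fun i j : Fin (l + r) => seesawEntry l r (i + 2) (j + 2)).submatrix
        finSumFinEquiv finSumFinEquiv =
      fromBlocks (-(A l).map (Int.cast : ℤ → ℝ)) 0 0 (-(A r).map (Int.cast : ℤ → ℝ)) := by
  ext (⟨i, hi⟩ | ⟨i, hi⟩) (⟨j, hj⟩ | ⟨j, hj⟩) <;> simp [seesawEntry, A] <;>
    split_ifs <;> first | omega | norm_num

theorem det_seesawEntry_add_two (l r : ℕ) :
    (of fun i j : Fin (l + r) => seesawEntry l r (i + 2) (j + 2)).det =
      (-1) ^ l * (l + 1) * ((-1) ^ r * (r + 1)) := by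
  rw [← det_submatrix_equiv_self finSumFinEquiv, seesawEntry_add_two_eq_fromBlocks,
    det_fromBlocks_zero₁₂, det_neg_map_A, det_neg_map_A]

theorem det_seesawEntry (l r : ℕ) :
    (of fun i j : Fin (l + r + 2) => seesawEntry l r i j).det =
      -((-1) ^ l * (l + 1) * ((-1) ^ r * (r + 1))) := by
  rw [det_eq_of_pendant_zero _ (fun j => by simp [seesawEntry]) (fun i => by simp [seesawEntry]),
    show ((of fun i j : Fin (l + r + 2) => seesawEntry l r i j).submatrix Fin.succ
        Fin.succ).submatrix Fin.succ Fin.succ =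
      of fun i j : Fin (l + r) => seesawEntry l r (i + 2) (j + 2) from rfl,
    det_seesawEntry_add_two]
  simp [seesawEntry]

/-- det A(S_{ℓ,r}) = (-1)^{1+ℓ+r} (1+ℓ)(1+r). -/
theorem stmt11 (l r : ℕ) :
    (seesawMatrix l r).det = (-1 : ℝ) ^ (1 + l + r) * (1 + l) * (1 + r) := by
  rw [show (seesawMatrix l r).det = _ from
      det_of_fin_congr (show 2 + l + r = l + r + 2 by omega) (seesawEntry l r),
    det_seesawEntry]
  ring
end

section
/- The weighted adjacency matrix of the seesaw graph S_{ℓ,r} has inertia (1, 1+ℓ+r, 0). -/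
/-!
Let `q x = x ⬝ᵥ A *ᵥ x` be the quadratic form of the seesaw matrix `A` of `S_{ℓ,r}`. Adding the
two arms one pendant vertex at a time shows
`q x = 2 x₁ (x₀ + x₁) - E(left arm) - E(right arm)`, where an arm `x₁ = p₀, p₁, …, pₖ` has energy
`E p = ∑ (pᵢ₊₁ - pᵢ)² + pₖ²`. Hence `q (e₀ + e₁) = 2 > 0`, while on the hyperplane
`x₀ + 2 x₁ = 0` the form equals `-2 x₁² - E - E` and is negative definite. In an eigenbasis
`q = ∑ λᵢ yᵢ²`, so a positive value of `q` forces a positive eigenvalue and a negative definite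
hyperplane forces at least `n - 1` negative eigenvalues; together they exhaust all `n`.
-/

open Finset Matrix

section Inertia

variable {n : Type*} [Fintype n] [DecidableEq n] {A : Matrix n n ℝ}

theorem Matrix.IsHermitian.dotProduct_mulVec_eq_sum_eigenvalues (hA : A.IsHermitian)
    (x : n → ℝ) :
    x ⬝ᵥ A *ᵥ x = ∑ i, hA.eigenvalues i *
      (star (hA.eigenvectorUnitary : Matrix n n ℝ) *ᵥ x) i ^ 2 := by
  set U := (hA.eigenvectorUnitary : Matrix n n ℝ)
  conv_lhs => rw [hA.spectral_theorem, Unitary.conjStarAlgAut_apply]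
  rw [← mulVec_mulVec, ← mulVec_mulVec, dotProduct_mulVec,
    show vecMul x U = star U *ᵥ x by
      rw [star_eq_conjTranspose, conjTranspose_eq_transpose_of_trivial, mulVec_transpose]]
  simp only [dotProduct, mulVec_diagonal, Function.comp_apply, RCLike.ofReal_real_eq_id, id]
  exact sum_congr rfl fun i _ => by ring

theorem Matrix.IsHermitian.exists_eigenvalues_pos (hA : A.IsHermitian) {x : n → ℝ}
    (hx : 0 < x ⬝ᵥ A *ᵥ x) : ∃ i, 0 < hA.eigenvalues i := by
  by_contra! h
  rw [hA.dotProduct_mulVec_eq_sum_eigenvalues] at hx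
  exact hx.not_ge <| sum_nonpos fun i _ => mul_nonpos_of_nonpos_of_nonneg (h i) (sq_nonneg _)

theorem Matrix.IsHermitian.card_le_finrank_add_card_eigenvalues_neg (hA : A.IsHermitian)
    {V : Type*} [AddCommGroup V] [Module ℝ V] [FiniteDimensional ℝ V] (f : (n → ℝ) →ₗ[ℝ] V)
    (hf : ∀ x, f x = 0 → x ≠ 0 → x ⬝ᵥ A *ᵥ x < 0) :
    Fintype.card n ≤ Module.finrank ℝ V + #{i | hA.eigenvalues i < 0} := by
  set S : Finset n := {i | hA.eigenvalues i < 0}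
  set U := (hA.eigenvectorUnitary : Matrix n n ℝ)
  let g : (n → ℝ) →ₗ[ℝ] V × (S → ℝ) :=
    f.prod (LinearMap.funLeft ℝ ℝ Subtype.val ∘ₗ (star U).mulVecLin)
  have hg : Function.Injective g := by
    refine (injective_iff_map_eq_zero g).2 fun x hx => ?_
    by_contra hx0
    refine (hf x (congrArg Prod.fst hx) hx0).not_ge ?_
    rw [hA.dotProduct_mulVec_eq_sum_eigenvalues]
    refine sum_nonneg fun i _ => ?_
    by_cases hi : hA.eigenvalues i < 0
    · have : (star U *ᵥ x) i = 0 := congrFun (congrArg Prod.snd hx) ⟨i, by simpa [S]⟩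
      simp [U, this]
    · exact mul_nonneg (not_lt.1 hi) (sq_nonneg _)
  simpa using LinearMap.finrank_le_finrank_of_injective hg

end Inertia

theorem card_filter_pos_add_card_filter_neg_add_card_filter_eq_zero {ι α : Type*} [Fintype ι]
    [LinearOrder α] [Zero α] (f : ι → α) :
    #{i | 0 < f i} + #{i | f i < 0} + #{i | f i = 0} = Fintype.card ι := by
  rw [card_filter, card_filter, card_filter, ← sum_add_distrib, ← sum_add_distrib,
    ← card_univ, card_eq_sum_ones]
  refine sum_congr rfl fun i _ => ?_
  rcases lt_trichotomy (f i) 0 with h | h | h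
  · simp [h, h.not_gt, h.ne]
  · simp [h]
  · simp [h, h.not_gt, h.ne']

theorem sum_range_succ_quadratic_of_pendant {e e' : ℕ → ℕ → ℝ} {m a : ℕ} (x : ℕ → ℝ)
    (ha : a < m) (hres : ∀ i < m, ∀ j < m, e' i j = e i j)
    (hrow : ∀ j < m, e' m j = if j = a then 1 else 0) (hcol : ∀ i < m, e' i m = e' m i)
    (hdiag : e' m m = -2) :
    ∑ i ∈ range (m + 1), ∑ j ∈ range (m + 1), x i * e' i j * x j =
      ∑ i ∈ range m, ∑ j ∈ range m, x i * e i j * x j + 2 * x m * (x a - x m) := by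
  have hrow' : ∑ j ∈ range m, x m * e' m j * x j = x m * x a := by
    rw [sum_congr rfl fun j hj => by rw [hrow j (mem_range.1 hj)]]
    simp [ha]
  have hcol' : ∑ i ∈ range m, x i * e' i m * x m = x m * x a := by
    rw [sum_congr rfl fun i hi => by rw [hcol i (mem_range.1 hi), hrow i (mem_range.1 hi)]]
    simp [ha, mul_comm]
  have hblock : ∑ i ∈ range m, ∑ j ∈ range m, x i * e' i j * x j =
      ∑ i ∈ range m, ∑ j ∈ range m, x i * e i j * x j :=
    sum_congr rfl fun i hi => sum_congr rfl fun j hj => by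
      rw [hres i (mem_range.1 hi) j (mem_range.1 hj)]
  simp only [sum_range_succ, sum_add_distrib, hblock, hrow', hcol', hdiag]
  ring

noncomputable def pathEnergy (p : ℕ → ℝ) (k : ℕ) : ℝ :=
  ∑ i ∈ range k, (p (i + 1) - p i) ^ 2 + p k ^ 2

@[simp]
theorem pathEnergy_zero (p : ℕ → ℝ) : pathEnergy p 0 = p 0 ^ 2 := by
  simp [pathEnergy]

theorem pathEnergy_succ (p : ℕ → ℝ) (k : ℕ) :
    pathEnergy p (k + 1) = pathEnergy p k + 2 * p (k + 1) * (p (k + 1) - p k) := by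
  rw [pathEnergy, pathEnergy, sum_range_succ]
  ring

theorem sq_le_pathEnergy (p : ℕ → ℝ) (k : ℕ) : p k ^ 2 ≤ pathEnergy p k :=
  le_add_of_nonneg_left (sum_nonneg fun _ _ => sq_nonneg _)

theorem pathEnergy_nonneg (p : ℕ → ℝ) (k : ℕ) : 0 ≤ pathEnergy p k :=
  (sq_nonneg _).trans (sq_le_pathEnergy p k)

theorem apply_eq_zero_of_pathEnergy_eq_zero {p : ℕ → ℝ} {k : ℕ} (h : pathEnergy p k = 0) :
    p k = 0 :=
  pow_eq_zero_iff two_ne_zero |>.1 <| le_antisymm (h ▸ sq_le_pathEnergy p k) (sq_nonneg _)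

theorem eq_zero_of_pathEnergy_eq_zero {p : ℕ → ℝ} {k : ℕ} (h : pathEnergy p k = 0) :
    ∀ i ≤ k, p i = 0 := by
  induction k with
  | zero => intro i hi; rw [Nat.le_zero.1 hi, apply_eq_zero_of_pathEnergy_eq_zero h]
  | succ k ih =>
    have hk := apply_eq_zero_of_pathEnergy_eq_zero h
    intro i hi
    rcases Nat.le_succ_iff.1 hi with hi | rfl
    · exact ih (by simpa [pathEnergy_succ, hk] using h) i hi
    · exact hk

/-- `armVertex o k` is the `k`-th vertex of an arm hanging off vertex `1` whose own vertices are
numbered from `o + 2`: the left arm is `armVertex 0`, the right arm `armVertex l`. -/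
def armVertex (o k : ℕ) : ℕ := if k = 0 then 1 else o + 1 + k

@[simp]
theorem armVertex_zero (o : ℕ) : armVertex o 0 = 1 := rfl

theorem armVertex_succ (o k : ℕ) : armVertex o (k + 1) = 2 + o + k := by
  simp only [armVertex, Nat.add_one_ne_zero, if_false]
  omega

theorem armVertex_lt (o k : ℕ) : armVertex o k < 2 + o + k := by
  unfold armVertex
  split_ifs <;> omega

theorem seesawEntry_comm (l r i j : ℕ) : seesawEntry l r i j = seesawEntry l r j i := by
  unfold seesawEntry
  by_cases h : i = j
  · subst h; rfl
  · simp only [if_neg h, if_neg (Ne.symm h), or_comm]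

theorem seesawEntry_self_of_two_le {l r i : ℕ} (hi : 2 ≤ i) : seesawEntry l r i i = -2 := by
  simp [seesawEntry, show ¬ i ≤ 1 by omega]

theorem seesawEntry_succ_left_of_lt {l i j : ℕ} (hi : i < 2 + l) (hj : j < 2 + l) :
    seesawEntry (l + 1) 0 i j = seesawEntry l 0 i j := by
  unfold seesawEntry
  repeat' apply if_congr
  all_goals first | rfl | omega

theorem seesawEntry_succ_left_last {l j : ℕ} (hj : j < 2 + l) :
    seesawEntry (l + 1) 0 (2 + l) j = if j = armVertex 0 l then 1 else 0 := by
  unfold seesawEntry armVertex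
  split_ifs <;> first | rfl | (exfalso; omega)

theorem seesawEntry_succ_right_of_lt {l r i j : ℕ} (hi : i < 2 + l + r) (hj : j < 2 + l + r) :
    seesawEntry l (r + 1) i j = seesawEntry l r i j := by
  unfold seesawEntry
  repeat' apply if_congr
  all_goals first | rfl | omega

theorem seesawEntry_succ_right_last {l r j : ℕ} (hj : j < 2 + l + r) :
    seesawEntry l (r + 1) (2 + l + r) j = if j = armVertex l r then 1 else 0 := by
  unfold seesawEntry armVertex
  split_ifs <;> first | rfl | (exfalso; omega)

noncomputable def seesawForm (l r : ℕ) (x : ℕ → ℝ) : ℝ :=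
  ∑ i ∈ range (2 + l + r), ∑ j ∈ range (2 + l + r), x i * seesawEntry l r i j * x j

theorem seesawForm_zero_zero (x : ℕ → ℝ) : seesawForm 0 0 x = 2 * x 0 * x 1 := by
  simp [seesawForm, sum_range_succ, seesawEntry, mul_comm (x 1), ← two_mul, mul_assoc]

theorem seesawForm_succ_left (l : ℕ) (x : ℕ → ℝ) :
    seesawForm (l + 1) 0 x = seesawForm l 0 x + 2 * x (2 + l) * (x (armVertex 0 l) - x (2 + l)) :=
  sum_range_succ_quadratic_of_pendant (m := 2 + l) x (by simpa using armVertex_lt 0 l)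
    (fun _ hi _ hj => seesawEntry_succ_left_of_lt (by omega) (by omega))
    (fun _ hj => seesawEntry_succ_left_last (by omega))
    (fun _ _ => seesawEntry_comm ..) (seesawEntry_self_of_two_le (by omega))

theorem seesawForm_succ_right (l r : ℕ) (x : ℕ → ℝ) :
    seesawForm l (r + 1) x =
      seesawForm l r x + 2 * x (2 + l + r) * (x (armVertex l r) - x (2 + l + r)) :=
  sum_range_succ_quadratic_of_pendant (m := 2 + l + r) x (armVertex_lt l r)
    (fun _ hi _ hj => seesawEntry_succ_right_of_lt hi hj)
    (fun _ hj => seesawEntry_succ_right_last hj)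
    (fun _ _ => seesawEntry_comm ..) (seesawEntry_self_of_two_le (by omega))

theorem seesawForm_eq (l r : ℕ) (x : ℕ → ℝ) :
    seesawForm l r x = 2 * x 1 * (x 0 + x 1) - pathEnergy (x ∘ armVertex 0) l -
      pathEnergy (x ∘ armVertex l) r := by
  induction r with
  | zero =>
    induction l with
    | zero =>
      simp only [seesawForm_zero_zero, pathEnergy_zero, Function.comp_apply, armVertex_zero]
      ring
    | succ l ih =>
      rw [seesawForm_succ_left, ih, pathEnergy_succ]
      simp only [pathEnergy_zero, Function.comp_apply, armVertex_zero, armVertex_succ]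
      ring
  | succ r ih =>
    rw [seesawForm_succ_right, ih, pathEnergy_succ]
    simp only [Function.comp_apply, armVertex_succ]
    ring

theorem seesawForm_neg {l r : ℕ} {x : ℕ → ℝ} (h01 : x 0 + 2 * x 1 = 0)
    (hx : ∃ k < 2 + l + r, x k ≠ 0) : seesawForm l r x < 0 := by
  obtain ⟨k, hk, hxk⟩ := hx
  have hL := pathEnergy_nonneg (x ∘ armVertex 0) l
  have hR := pathEnergy_nonneg (x ∘ armVertex l) r
  rw [seesawForm_eq, show x 0 = -2 * x 1 by linarith]
  by_contra! hge
  have h1 : x 1 = 0 := by nlinarith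
  have hL0 : pathEnergy (x ∘ armVertex 0) l = 0 := by nlinarith
  have hR0 : pathEnergy (x ∘ armVertex l) r = 0 := by nlinarith
  apply hxk
  rcases Nat.lt_or_ge k 2 with hk2 | hk2
  · interval_cases k <;> linarith
  obtain ⟨i, rfl⟩ := Nat.exists_eq_add_of_le hk2
  rcases Nat.lt_or_ge i l with hil | hil
  · simpa [armVertex_succ] using eq_zero_of_pathEnergy_eq_zero hL0 (i + 1) hil
  · obtain ⟨j, rfl⟩ := Nat.exists_eq_add_of_le hil
    simpa [armVertex_succ, add_assoc] using
      eq_zero_of_pathEnergy_eq_zero hR0 (j + 1) (by omega)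

theorem seesawMatrix_dotProduct_mulVec (l r : ℕ) (x : ℕ → ℝ) :
    (fun i : Fin (2 + l + r) => x i) ⬝ᵥ seesawMatrix l r *ᵥ (fun i => x i) =
      seesawForm l r x := by
  simp only [dotProduct, mulVec, seesawMatrix, mul_sum, ← mul_assoc, seesawForm]
  rw [Fin.sum_univ_eq_sum_range (fun i => ∑ j : Fin (2 + l + r), x i * seesawEntry l r i j * x j)]
  exact sum_congr rfl fun i _ =>
    Fin.sum_univ_eq_sum_range (fun j => x i * seesawEntry l r i j * x j) _

theorem exists_dotProduct_seesawMatrix_mulVec_pos (l r : ℕ) :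
    ∃ v : Fin (2 + l + r) → ℝ, 0 < v ⬝ᵥ seesawMatrix l r *ᵥ v :=
  ⟨Pi.single ⟨0, by omega⟩ 1 + Pi.single ⟨1, by omega⟩ 1, by
    simp [mulVec_add, dotProduct_add, add_dotProduct, mulVec_single, single_dotProduct,
      seesawMatrix, seesawEntry]⟩

theorem seesawMatrix_dotProduct_mulVec_neg {l r : ℕ} {y : Fin (2 + l + r) → ℝ}
    (h01 : y ⟨0, by omega⟩ + 2 * y ⟨1, by omega⟩ = 0) (hy : y ≠ 0) :
    y ⬝ᵥ seesawMatrix l r *ᵥ y < 0 := by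
  set x : ℕ → ℝ := fun k => if h : k < 2 + l + r then y ⟨k, h⟩ else 0
  have hxy : y = fun i : Fin (2 + l + r) => x i := by ext i; simp [x]
  obtain ⟨i, hi⟩ := Function.ne_iff.1 hy
  rw [hxy, seesawMatrix_dotProduct_mulVec]
  exact seesawForm_neg (by simpa [x, show 1 < 2 + l + r by omega] using h01)
    ⟨i, i.2, by simpa [x] using hi⟩

/-- the weighted adjacency matrix of the seesaw graph S_{ℓ,r}
has inertia (1, 1+ℓ+r, 0). -/
theorem stmt12 (l r : ℕ) (hH : (seesawMatrix l r).IsHermitian) :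
    (Finset.univ.filter fun i => 0 < hH.eigenvalues i).card = 1 ∧
    (Finset.univ.filter fun i => hH.eigenvalues i < 0).card = 1 + l + r ∧
    (Finset.univ.filter fun i => hH.eigenvalues i = 0).card = 0 := by
  have hpos : 1 ≤ #{i | 0 < hH.eigenvalues i} := by
    obtain ⟨v, hv⟩ := exists_dotProduct_seesawMatrix_mulVec_pos l r
    obtain ⟨i, hi⟩ := hH.exists_eigenvalues_pos hv
    exact card_pos.2 ⟨i, by simpa using hi⟩
  have hneg : 2 + l + r ≤ 1 + #{i | hH.eigenvalues i < 0} := by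
    let f : (Fin (2 + l + r) → ℝ) →ₗ[ℝ] ℝ :=
      LinearMap.proj ⟨0, by omega⟩ + 2 • LinearMap.proj ⟨1, by omega⟩
    simpa using hH.card_le_finrank_add_card_eigenvalues_neg f
      fun y hy => seesawMatrix_dotProduct_mulVec_neg (by simpa [f] using hy)
  have := card_filter_pos_add_card_filter_neg_add_card_filter_eq_zero hH.eigenvalues
  simp only [Fintype.card_fin] at this
  omega
end

section
/- Let A be a nonsingular real symmetric n×n matrix with leading principal minors D_1, …, D_n such that no two consecutive terms of the sequence D_1, …, D_n are both zero. Then the number of negative eigenvalues of A equals the number of sign changes in the sequence 1, D_1, …, D_n after deleting the zero terms. -/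
/-- The leading principal minor of order k+1 (the determinant of the top-left
(k+1)×(k+1) submatrix). -/
noncomputable def leadMinor {n : ℕ} (A : Matrix (Fin n) (Fin n) ℝ) (k : Fin n) : ℝ :=
  (A.submatrix (Fin.castLE k.2) (Fin.castLE k.2)).det

/-- The number of sign changes in a list of reals, after deleting the zeros. -/
noncomputable def signChanges (L : List ℝ) : ℕ :=
  let L' := L.filter fun x => decide (x ≠ 0)
  (L'.zip L'.tail).countP fun p => decide (p.1 * p.2 < 0)

open Matrix Module Finset

variable {m : ℕ}

noncomputable def scCore (P : List ℝ) : ℕ :=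
  (P.zip P.tail).countP fun p => decide (p.1 * p.2 < 0)

lemma scCore_append (P : List ℝ) (a : ℝ) :
    scCore (P ++ [a]) = scCore P + (match P.getLast? with
      | none => 0
      | some b => if b * a < 0 then 1 else 0) := by
  induction P with
  | nil => simp [scCore]
  | cons b Q ih =>
    cases Q with
    | nil => simp [scCore, List.countP_cons, List.countP_nil]
    | cons c Q' =>
      have h1 : scCore ((b :: c :: Q') ++ [a]) =
          (if b * c < 0 then 1 else 0) + scCore ((c :: Q') ++ [a]) := by
        simp [scCore, List.countP_cons]
        by_cases h : b * c < 0 <;> simp [h] <;> ring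
      have h2 : scCore (b :: c :: Q') =
          (if b * c < 0 then 1 else 0) + scCore (c :: Q') := by
        simp [scCore, List.countP_cons]
        by_cases h : b * c < 0 <;> simp [h] <;> ring
      rw [h1, ih, h2]
      have : (b :: c :: Q').getLast? = (c :: Q').getLast? := by simp
      rw [this]
      ring

lemma signChanges_eq (L : List ℝ) : signChanges L = scCore (L.filter fun x => decide (x ≠ 0)) := rfl

lemma filter_append_ne (L : List ℝ) (a : ℝ) (ha : a ≠ 0) :
    ((L ++ [a]).filter fun x => decide (x ≠ 0)) = (L.filter fun x => decide (x ≠ 0)) ++ [a] := by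
  simp [List.filter_append, ha]

lemma filter_append_zero (L : List ℝ) :
    ((L ++ [(0:ℝ)]).filter fun x => decide (x ≠ 0)) = (L.filter fun x => decide (x ≠ 0)) := by
  simp [List.filter_append]

lemma signChanges_append_ne (L : List ℝ) (a b : ℝ) (ha : a ≠ 0)
    (hb : ((L.filter fun x => decide (x ≠ 0)).getLast?) = some b) :
    signChanges (L ++ [a]) = signChanges L + if b * a < 0 then 1 else 0 := by
  rw [signChanges_eq, filter_append_ne L a ha, scCore_append, hb, ← signChanges_eq]

lemma signChanges_append_zero (L : List ℝ) :
    signChanges (L ++ [(0:ℝ)]) = signChanges L := by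
  rw [signChanges_eq, filter_append_zero, ← signChanges_eq]

lemma getLast_filter_append (L : List ℝ) (a : ℝ) (ha : a ≠ 0) :
    (((L ++ [a]).filter fun x => decide (x ≠ 0)).getLast?) = some a := by
  rw [filter_append_ne L a ha]; simp

open Matrix Module Finset

variable {m : ℕ}

noncomputable def negCount (A : Matrix (Fin m) (Fin m) ℝ) (hA : A.IsHermitian) : ℕ :=
  (Finset.univ.filter fun i => hA.eigenvalues i < 0).card

noncomputable def posCount (A : Matrix (Fin m) (Fin m) ℝ) (hA : A.IsHermitian) : ℕ :=
  (Finset.univ.filter fun i => 0 < hA.eigenvalues i).card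

lemma det_eq_prod_real (A : Matrix (Fin m) (Fin m) ℝ) (hA : A.IsHermitian) :
    A.det = ∏ i, hA.eigenvalues i := by
  simpa using hA.det_eq_prod_eigenvalues

lemma eigenvalues_ne_zero (A : Matrix (Fin m) (Fin m) ℝ) (hA : A.IsHermitian)
    (hdet : A.det ≠ 0) (i : Fin m) : hA.eigenvalues i ≠ 0 := by
  rw [det_eq_prod_real A hA] at hdet
  exact Finset.prod_ne_zero_iff.mp hdet i (Finset.mem_univ i)

lemma det_eq_sign_mul (A : Matrix (Fin m) (Fin m) ℝ) (hA : A.IsHermitian)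
    (hdet : A.det ≠ 0) :
    ∃ c : ℝ, 0 < c ∧ A.det = (-1) ^ negCount A hA * c := by
  refine ⟨∏ i, |hA.eigenvalues i|, Finset.prod_pos fun i _ =>
    abs_pos.mpr (eigenvalues_ne_zero A hA hdet i), ?_⟩
  rw [det_eq_prod_real A hA]
  have : ∀ i ∈ Finset.univ, hA.eigenvalues i
      = (if hA.eigenvalues i < 0 then (-1:ℝ) else 1) * |hA.eigenvalues i| := by
    intro i _
    rcases lt_or_gt_of_ne (eigenvalues_ne_zero A hA hdet i) with h | h
    · simp [h, abs_of_neg h]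
    · simp [not_lt.mpr h.le, abs_of_pos h]
  rw [Finset.prod_congr rfl this, Finset.prod_mul_distrib, Finset.prod_ite,
    Finset.prod_const, Finset.prod_const_one, mul_one, negCount]

lemma count_nonsingular (A : Matrix (Fin m) (Fin m) ℝ) (hA : A.IsHermitian)
    (hdet : A.det ≠ 0) : negCount A hA + posCount A hA = m := by
  have h : (Finset.univ.filter fun i => 0 < hA.eigenvalues i)
      = Finset.univ.filter fun i => ¬ hA.eigenvalues i < 0 := by
    apply Finset.filter_congr
    intro i _
    have := eigenvalues_ne_zero A hA hdet i
    constructor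
    · intro h; exact not_lt.mpr h.le
    · intro h; exact lt_of_le_of_ne (not_lt.mp h) (Ne.symm this)
  rw [negCount, posCount, h, Finset.card_filter_add_card_filter_not]
  simp

lemma count_singular (A : Matrix (Fin m) (Fin m) ℝ) (hA : A.IsHermitian)
    (hdet : A.det = 0) : negCount A hA + posCount A hA + 1 ≤ m := by
  rw [det_eq_prod_real A hA] at hdet
  obtain ⟨i₀, -, hi₀⟩ := Finset.prod_eq_zero_iff.mp hdet
  have hsub : (Finset.univ.filter fun i => hA.eigenvalues i < 0)
      ∪ (Finset.univ.filter fun i => 0 < hA.eigenvalues i) ⊆ Finset.univ.erase i₀ := by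
    intro i hi
    rcases Finset.mem_union.mp hi with h | h <;>
    · rw [Finset.mem_filter] at h
      refine Finset.mem_erase.mpr ⟨?_, Finset.mem_univ i⟩
      rintro rfl
      rw [hi₀] at h
      simp at h
  have hdisj : Disjoint (Finset.univ.filter fun i => hA.eigenvalues i < 0)
      (Finset.univ.filter fun i => 0 < hA.eigenvalues i) := by
    rw [Finset.disjoint_filter]
    intro i _ h
    exact not_lt.mpr h.le
  have := Finset.card_le_card hsub
  rw [Finset.card_union_of_disjoint hdisj, Finset.card_erase_of_mem (Finset.mem_univ i₀)] at this
  have hm : 1 ≤ m := Fin.pos i₀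
  have hcu : (Finset.univ : Finset (Fin m)).card = m := Finset.card_univ.trans (Fintype.card_fin m)
  rw [negCount, posCount]
  omega

variable {m : ℕ}

noncomputable def qf (A : Matrix (Fin m) (Fin m) ℝ) (x : Fin m → ℝ) : ℝ := x ⬝ᵥ (A *ᵥ x)

noncomputable def evec (A : Matrix (Fin m) (Fin m) ℝ) (hA : A.IsHermitian) (i : Fin m) :
    Fin m → ℝ := ⇑(hA.eigenvectorBasis i)

/-- dot product with a fixed vector, as a linear map -/
noncomputable def dpL (w : Fin m → ℝ) : (Fin m → ℝ) →ₗ[ℝ] ℝ where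
  toFun x := w ⬝ᵥ x
  map_add' x y := dotProduct_add w x y
  map_smul' c x := by simp [dotProduct_smul, smul_eq_mul]

@[simp] lemma dpL_apply (w x : Fin m → ℝ) : dpL w x = w ⬝ᵥ x := rfl

lemma spectral_real (A : Matrix (Fin m) (Fin m) ℝ) (hA : A.IsHermitian) :
    A = (hA.eigenvectorUnitary : Matrix (Fin m) (Fin m) ℝ) * diagonal hA.eigenvalues
      * star (hA.eigenvectorUnitary : Matrix (Fin m) (Fin m) ℝ) := by
  have := hA.spectral_theorem
  simpa using this

lemma star_apply_eq (A : Matrix (Fin m) (Fin m) ℝ) (hA : A.IsHermitian) (i j : Fin m) :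
    (star (hA.eigenvectorUnitary : Matrix (Fin m) (Fin m) ℝ)) i j = evec A hA i j := by
  simp [Matrix.star_apply, evec]

lemma starU_mulVec (A : Matrix (Fin m) (Fin m) ℝ) (hA : A.IsHermitian) (x : Fin m → ℝ) (i : Fin m) :
    ((star (hA.eigenvectorUnitary : Matrix (Fin m) (Fin m) ℝ)) *ᵥ x) i = evec A hA i ⬝ᵥ x := by
  simp [Matrix.mulVec, dotProduct, star_apply_eq A hA]

lemma qf_eq_sum (A : Matrix (Fin m) (Fin m) ℝ) (hA : A.IsHermitian) (x : Fin m → ℝ) :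
    qf A x = ∑ i, hA.eigenvalues i * (evec A hA i ⬝ᵥ x) ^ 2 := by
  set U := (hA.eigenvectorUnitary : Matrix (Fin m) (Fin m) ℝ) with hU
  have h1 : qf A x = x ⬝ᵥ ((U * diagonal hA.eigenvalues * star U) *ᵥ x) := by
    rw [qf, ← spectral_real A hA]
  rw [h1]
  rw [← Matrix.mulVec_mulVec, ← Matrix.mulVec_mulVec, Matrix.dotProduct_mulVec x U]
  have hvm : Matrix.vecMul x U = (star U) *ᵥ x := by
    ext i
    simp [Matrix.vecMul, Matrix.mulVec, dotProduct, Matrix.star_apply, mul_comm]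
  rw [hvm]
  set y := (star U) *ᵥ x with hy
  have : y ⬝ᵥ (diagonal hA.eigenvalues *ᵥ y) = ∑ i, hA.eigenvalues i * y i ^ 2 := by
    simp only [dotProduct, Matrix.mulVec_diagonal]
    exact Finset.sum_congr rfl fun i _ => by ring
  rw [this]
  exact Finset.sum_congr rfl fun i _ => by rw [hy, starU_mulVec A hA x i]

lemma evec_orth (A : Matrix (Fin m) (Fin m) ℝ) (hA : A.IsHermitian) (i k : Fin m) :
    evec A hA i ⬝ᵥ evec A hA k = if i = k then 1 else 0 := by
  set U := (hA.eigenvectorUnitary : Matrix (Fin m) (Fin m) ℝ) with hU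
  have h : star U * U = 1 := by
    have := (Matrix.mem_unitaryGroup_iff').mp (hA.eigenvectorUnitary).2
    exact this
  have h3 : (star U * U) i k = evec A hA i ⬝ᵥ evec A hA k := by
    rw [hU]
    simp [Matrix.mul_apply, dotProduct, Matrix.star_apply, evec]
  have h4 : (star U * U) i k = (1 : Matrix (Fin m) (Fin m) ℝ) i k := by rw [h]
  rw [← h3, h4, Matrix.one_apply]

lemma eq_zero_of_orth (A : Matrix (Fin m) (Fin m) ℝ) (hA : A.IsHermitian) (x : Fin m → ℝ)
    (h : ∀ i, evec A hA i ⬝ᵥ x = 0) : x = 0 := by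
  set U := (hA.eigenvectorUnitary : Matrix (Fin m) (Fin m) ℝ) with hU
  have h1 : U * star U = 1 := (Matrix.mem_unitaryGroup_iff).mp (hA.eigenvectorUnitary).2
  have h2 : (star U) *ᵥ x = 0 := by
    ext i; rw [starU_mulVec A hA x i, h i]; rfl
  calc x = (U * star U) *ᵥ x := by rw [h1, Matrix.one_mulVec]
  _ = U *ᵥ ((star U) *ᵥ x) := by rw [Matrix.mulVec_mulVec]
  _ = 0 := by rw [h2, Matrix.mulVec_zero]

section Span

variable (A : Matrix (Fin m) (Fin m) ℝ) (hA : A.IsHermitian)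

noncomputable def eigSpan (s : Finset (Fin m)) : Submodule ℝ (Fin m → ℝ) :=
  Submodule.span ℝ (evec A hA '' ↑s)

lemma finrank_eigSpan (s : Finset (Fin m)) : finrank ℝ (eigSpan A hA s) = s.card := by
  have hli : LinearIndependent ℝ (fun i : ↥s => evec A hA ↑i) := by
    rw [Fintype.linearIndependent_iff]
    intro g hg k
    have h1 := congrArg (dpL (evec A hA ↑k)) hg
    rw [map_sum, map_zero] at h1
    simp only [_root_.map_smul, dpL_apply, smul_eq_mul, dotProduct_smul] at h1
    have h2 : ∀ i : ↥s, g i * (evec A hA ↑k ⬝ᵥ evec A hA ↑i)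
        = if k = i then g i else 0 := by
      intro i
      rw [evec_orth]
      rcases eq_or_ne k i with h | h
      · simp [h]
      · have : (↑k : Fin m) ≠ ↑i := fun hc => h (Subtype.ext hc)
        simp [this, h]
    rw [Finset.sum_congr rfl (fun i _ => h2 i),
      Finset.sum_ite_eq _ k (fun i => g i)] at h1
    simpa using h1
  have him : evec A hA '' ↑s = Set.range (fun i : ↥s => evec A hA ↑i) :=
    Set.image_eq_range _ _
  rw [eigSpan, him, finrank_span_eq_card hli, Fintype.card_coe]

lemma eigSpan_orth (s : Finset (Fin m)) (x : Fin m → ℝ) (hx : x ∈ eigSpan A hA s)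
    (j : Fin m) (hj : j ∉ s) : evec A hA j ⬝ᵥ x = 0 := by
  have hle : eigSpan A hA s ≤ LinearMap.ker (dpL (evec A hA j)) := by
    rw [eigSpan, Submodule.span_le]
    rintro _ ⟨i, hi, rfl⟩
    simp only [SetLike.mem_coe, LinearMap.mem_ker, dpL_apply]
    rw [evec_orth]
    have : j ≠ i := by rintro rfl; exact hj (by exact_mod_cast hi)
    simp [this]
  simpa using hle hx

lemma qf_on_eigSpan (s : Finset (Fin m)) (x : Fin m → ℝ) (hx : x ∈ eigSpan A hA s) :
    qf A x = ∑ i ∈ s, hA.eigenvalues i * (evec A hA i ⬝ᵥ x) ^ 2 := by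
  rw [qf_eq_sum A hA]
  symm
  apply Finset.sum_subset (Finset.subset_univ s)
  intro i _ hi
  rw [eigSpan_orth A hA s x hx i hi]
  ring

lemma exists_negSpace : ∃ W : Submodule ℝ (Fin m → ℝ),
    finrank ℝ W = negCount A hA ∧ ∀ x ∈ W, x ≠ 0 → qf A x < 0 := by
  refine ⟨eigSpan A hA (Finset.univ.filter fun i => hA.eigenvalues i < 0),
    finrank_eigSpan A hA _, ?_⟩
  intro x hx hx0
  rw [qf_on_eigSpan A hA _ x hx]
  obtain ⟨i0, hi0⟩ : ∃ i, evec A hA i ⬝ᵥ x ≠ 0 := by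
    by_contra h
    push_neg at h
    exact hx0 (eq_zero_of_orth A hA x h)
  have hi0s : i0 ∈ Finset.univ.filter fun i => hA.eigenvalues i < 0 := by
    by_contra h
    exact hi0 (eigSpan_orth A hA _ x hx i0 h)
  have := Finset.sum_lt_sum (s := Finset.univ.filter fun i => hA.eigenvalues i < 0)
    (f := fun i => hA.eigenvalues i * (evec A hA i ⬝ᵥ x) ^ 2) (g := fun _ => (0:ℝ))
    (fun i hi => mul_nonpos_of_nonpos_of_nonneg
      (le_of_lt (Finset.mem_filter.mp hi).2) (sq_nonneg _))
    ⟨i0, hi0s, mul_neg_of_neg_of_pos (Finset.mem_filter.mp hi0s).2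
      (by positivity)⟩
  simpa using this

lemma exists_posSpace : ∃ W : Submodule ℝ (Fin m → ℝ),
    finrank ℝ W = posCount A hA ∧ ∀ x ∈ W, x ≠ 0 → 0 < qf A x := by
  refine ⟨eigSpan A hA (Finset.univ.filter fun i => 0 < hA.eigenvalues i),
    finrank_eigSpan A hA _, ?_⟩
  intro x hx hx0
  rw [qf_on_eigSpan A hA _ x hx]
  obtain ⟨i0, hi0⟩ : ∃ i, evec A hA i ⬝ᵥ x ≠ 0 := by
    by_contra h
    push_neg at h
    exact hx0 (eq_zero_of_orth A hA x h)
  have hi0s : i0 ∈ Finset.univ.filter fun i => 0 < hA.eigenvalues i := by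
    by_contra h
    exact hi0 (eigSpan_orth A hA _ x hx i0 h)
  have := Finset.sum_lt_sum (s := Finset.univ.filter fun i => 0 < hA.eigenvalues i)
    (f := fun _ => (0:ℝ)) (g := fun i => hA.eigenvalues i * (evec A hA i ⬝ᵥ x) ^ 2)
    (fun i hi => mul_nonneg (le_of_lt (Finset.mem_filter.mp hi).2) (sq_nonneg _))
    ⟨i0, hi0s, mul_pos (Finset.mem_filter.mp hi0s).2 (by positivity)⟩
  simpa using this

lemma finrank_pi_m : finrank ℝ (Fin m → ℝ) = m := by
  simp [Module.finrank_fin_fun]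

lemma negSpace_bound (W : Submodule ℝ (Fin m → ℝ))
    (hW : ∀ x ∈ W, x ≠ 0 → qf A x < 0) : finrank ℝ W ≤ negCount A hA := by
  set t := Finset.univ.filter fun i => ¬ hA.eigenvalues i < 0 with ht
  set P := eigSpan A hA t with hP
  have hqP : ∀ x ∈ P, 0 ≤ qf A x := by
    intro x hx
    rw [qf_on_eigSpan A hA t x hx]
    exact Finset.sum_nonneg fun i hi =>
      mul_nonneg (not_lt.mp (Finset.mem_filter.mp hi).2) (sq_nonneg _)
  have hWP : W ⊓ P = ⊥ := by
    rw [Submodule.eq_bot_iff]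
    intro x hx
    by_contra h0
    exact absurd (hqP x hx.2) (not_le.mpr (hW x hx.1 h0))
  have hdim := Submodule.finrank_sup_add_finrank_inf_eq W P
  rw [hWP, finrank_bot] at hdim
  have h1 : finrank ℝ P = t.card := finrank_eigSpan A hA t
  have h2 : negCount A hA + t.card = m := by
    rw [negCount, ht]
    rw [Finset.card_filter_add_card_filter_not]
    simp
  have h3 : finrank ℝ ↥(W ⊔ P) ≤ m := le_of_le_of_eq (Submodule.finrank_le (W ⊔ P)) finrank_pi_m
  omega

lemma posSpace_bound (W : Submodule ℝ (Fin m → ℝ))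
    (hW : ∀ x ∈ W, x ≠ 0 → 0 < qf A x) : finrank ℝ W ≤ posCount A hA := by
  set t := Finset.univ.filter fun i => ¬ 0 < hA.eigenvalues i with ht
  set P := eigSpan A hA t with hP
  have hqP : ∀ x ∈ P, qf A x ≤ 0 := by
    intro x hx
    rw [qf_on_eigSpan A hA t x hx]
    exact Finset.sum_nonpos fun i hi =>
      mul_nonpos_of_nonpos_of_nonneg (not_lt.mp (Finset.mem_filter.mp hi).2) (sq_nonneg _)
  have hWP : W ⊓ P = ⊥ := by
    rw [Submodule.eq_bot_iff]
    intro x hx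
    by_contra h0
    exact absurd (hqP x hx.2) (not_le.mpr (hW x hx.1 h0))
  have hdim := Submodule.finrank_sup_add_finrank_inf_eq W P
  rw [hWP, finrank_bot] at hdim
  have h1 : finrank ℝ P = t.card := finrank_eigSpan A hA t
  have h2 : posCount A hA + t.card = m := by
    rw [posCount, ht]
    rw [Finset.card_filter_add_card_filter_not]
    simp
  have h3 : finrank ℝ ↥(W ⊔ P) ≤ m := le_of_le_of_eq (Submodule.finrank_le (W ⊔ P)) finrank_pi_m
  omega

end Span

section Pad

variable {n : ℕ}

noncomputable def padLM (h : m ≤ n) : (Fin m → ℝ) →ₗ[ℝ] (Fin n → ℝ) where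
  toFun x j := if hj : (j : ℕ) < m then x ⟨j, hj⟩ else 0
  map_add' x y := by funext j; by_cases hj : (j:ℕ) < m <;> simp [hj]
  map_smul' c x := by funext j; by_cases hj : (j:ℕ) < m <;> simp [hj]

lemma padLM_castLE (h : m ≤ n) (x : Fin m → ℝ) (i : Fin m) :
    padLM h x (Fin.castLE h i) = x i := by
  simp only [padLM, LinearMap.coe_mk, AddHom.coe_mk, Fin.coe_castLE]
  rw [dif_pos i.isLt]

lemma padLM_inj (h : m ≤ n) : Function.Injective (padLM h) := by
  intro x y hxy
  funext i
  have := congrFun hxy (Fin.castLE h i)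
  rwa [padLM_castLE, padLM_castLE] at this

lemma padLM_sum (h : m ≤ n) (x : Fin m → ℝ) (g : Fin n → ℝ) :
    ∑ j, padLM h x j * g j = ∑ i, x i * g (Fin.castLE h i) := by
  have himage : ∀ j : Fin n, j ∉ Finset.univ.image (Fin.castLE h) → padLM h x j = 0 := by
    intro j hj
    have hlt : ¬ (j : ℕ) < m := by
      intro hlt
      exact hj (Finset.mem_image.mpr ⟨⟨j, hlt⟩, Finset.mem_univ _, by ext; simp⟩)
    simp [padLM, hlt]
  rw [← Finset.sum_subset (Finset.subset_univ (Finset.univ.image (Fin.castLE h)))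
      (fun j _ hj => by rw [himage j hj, zero_mul])]
  rw [Finset.sum_image (fun a _ b _ hab => Fin.castLE_injective h hab)]
  exact Finset.sum_congr rfl fun i _ => by rw [padLM_castLE]

lemma padLM_qf (h : m ≤ n) (A : Matrix (Fin n) (Fin n) ℝ) (x : Fin m → ℝ) :
    qf A (padLM h x) = qf (A.submatrix (Fin.castLE h) (Fin.castLE h)) x := by
  rw [qf, qf, dotProduct, padLM_sum h x (A *ᵥ padLM h x), dotProduct]
  apply Finset.sum_congr rfl
  intro i _
  congr 1
  rw [Matrix.mulVec, dotProduct, Matrix.mulVec, dotProduct]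
  calc ∑ j, A (Fin.castLE h i) j * padLM h x j
      = ∑ j, padLM h x j * A (Fin.castLE h i) j :=
        Finset.sum_congr rfl fun _ _ => mul_comm _ _
    _ = ∑ k, x k * A (Fin.castLE h i) (Fin.castLE h k) := padLM_sum h x _
    _ = ∑ k, A.submatrix (Fin.castLE h) (Fin.castLE h) i k * x k :=
        Finset.sum_congr rfl fun _ _ => by rw [Matrix.submatrix_apply]; ring

lemma negCount_le_of_le (h : m ≤ n) (A : Matrix (Fin n) (Fin n) ℝ) (hA : A.IsHermitian) :
    negCount (A.submatrix (Fin.castLE h) (Fin.castLE h)) (hA.submatrix _) ≤ negCount A hA := by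
  obtain ⟨W, hWrank, hWneg⟩ := exists_negSpace (A.submatrix (Fin.castLE h) (Fin.castLE h))
    (hA.submatrix _)
  have hr : finrank ℝ (W.map (padLM h)) = finrank ℝ W :=
    (W.equivMapOfInjective _ (padLM_inj h)).finrank_eq.symm
  have hcond : ∀ x ∈ W.map (padLM h), x ≠ 0 → qf A x < 0 := by
    rintro _ ⟨x, hxW, rfl⟩ hne
    have hx0 : x ≠ 0 := fun hc => hne (by rw [hc, map_zero])
    rw [padLM_qf h A x]
    exact hWneg x hxW hx0
  calc negCount (A.submatrix (Fin.castLE h) (Fin.castLE h)) (hA.submatrix _)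
      = finrank ℝ (W.map (padLM h)) := by rw [hr, hWrank]
    _ ≤ negCount A hA := negSpace_bound A hA _ hcond

lemma posCount_le_of_le (h : m ≤ n) (A : Matrix (Fin n) (Fin n) ℝ) (hA : A.IsHermitian) :
    posCount (A.submatrix (Fin.castLE h) (Fin.castLE h)) (hA.submatrix _) ≤ posCount A hA := by
  obtain ⟨W, hWrank, hWneg⟩ := exists_posSpace (A.submatrix (Fin.castLE h) (Fin.castLE h))
    (hA.submatrix _)
  have hr : finrank ℝ (W.map (padLM h)) = finrank ℝ W :=
    (W.equivMapOfInjective _ (padLM_inj h)).finrank_eq.symm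
  have hcond : ∀ x ∈ W.map (padLM h), x ≠ 0 → 0 < qf A x := by
    rintro _ ⟨x, hxW, rfl⟩ hne
    have hx0 : x ≠ 0 := fun hc => hne (by rw [hc, map_zero])
    rw [padLM_qf h A x]
    exact hWneg x hxW hx0
  calc posCount (A.submatrix (Fin.castLE h) (Fin.castLE h)) (hA.submatrix _)
      = finrank ℝ (W.map (padLM h)) := by rw [hr, hWrank]
    _ ≤ posCount A hA := posSpace_bound A hA _ hcond

lemma negCount_add_le (h : m ≤ n) (A : Matrix (Fin n) (Fin n) ℝ) (hA : A.IsHermitian) :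
    negCount A hA + m ≤
      negCount (A.submatrix (Fin.castLE h) (Fin.castLE h)) (hA.submatrix _) + n := by
  obtain ⟨W, hWrank, hWneg⟩ := exists_negSpace A hA
  set R := LinearMap.range (padLM h) with hR
  have hRrank : finrank ℝ R = m := by
    rw [hR, LinearMap.finrank_range_of_inj (padLM_inj h), finrank_pi_m]
  have hdim := Submodule.finrank_sup_add_finrank_inf_eq W R
  have hsup : finrank ℝ ↥(W ⊔ R) ≤ n := le_of_le_of_eq (Submodule.finrank_le _) finrank_pi_m
  set U' := (W ⊓ R).comap (padLM h) with hU'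
  have hmapU : U'.map (padLM h) = W ⊓ R := by
    rw [hU', Submodule.map_comap_eq_self]
    exact inf_le_right
  have hrankU' : finrank ℝ U' = finrank ℝ ↥(W ⊓ R) := by
    conv_rhs => rw [← hmapU]
    exact (U'.equivMapOfInjective _ (padLM_inj h)).finrank_eq
  have hbound : finrank ℝ U' ≤
      negCount (A.submatrix (Fin.castLE h) (Fin.castLE h)) (hA.submatrix _) := by
    apply negSpace_bound
    intro x hx hx0
    have hmem : padLM h x ∈ W ⊓ R := Submodule.mem_comap.mp hx
    have h2 : padLM h x ≠ 0 := fun hc => hx0 (padLM_inj h (by rw [hc, map_zero]))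
    have := hWneg _ (Submodule.mem_inf.mp hmem).1 h2
    rwa [padLM_qf h A x] at this
  omega

lemma posCount_add_le (h : m ≤ n) (A : Matrix (Fin n) (Fin n) ℝ) (hA : A.IsHermitian) :
    posCount A hA + m ≤
      posCount (A.submatrix (Fin.castLE h) (Fin.castLE h)) (hA.submatrix _) + n := by
  obtain ⟨W, hWrank, hWneg⟩ := exists_posSpace A hA
  set R := LinearMap.range (padLM h) with hR
  have hRrank : finrank ℝ R = m := by
    rw [hR, LinearMap.finrank_range_of_inj (padLM_inj h), finrank_pi_m]
  have hdim := Submodule.finrank_sup_add_finrank_inf_eq W R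
  have hsup : finrank ℝ ↥(W ⊔ R) ≤ n := le_of_le_of_eq (Submodule.finrank_le _) finrank_pi_m
  set U' := (W ⊓ R).comap (padLM h) with hU'
  have hmapU : U'.map (padLM h) = W ⊓ R := by
    rw [hU', Submodule.map_comap_eq_self]
    exact inf_le_right
  have hrankU' : finrank ℝ U' = finrank ℝ ↥(W ⊓ R) := by
    conv_rhs => rw [← hmapU]
    exact (U'.equivMapOfInjective _ (padLM_inj h)).finrank_eq
  have hbound : finrank ℝ U' ≤
      posCount (A.submatrix (Fin.castLE h) (Fin.castLE h)) (hA.submatrix _) := by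
    apply posSpace_bound
    intro x hx hx0
    have hmem : padLM h x ∈ W ⊓ R := Submodule.mem_comap.mp hx
    have h2 : padLM h x ≠ 0 := fun hc => hx0 (padLM_inj h (by rw [hc, map_zero]))
    have := hWneg _ (Submodule.mem_inf.mp hmem).1 h2
    rwa [padLM_qf h A x] at this
  omega

end Pad
section Main

lemma prod_sign (a b : ℕ) (c c' : ℝ) (hc : 0 < c) (hc' : 0 < c') :
    ((-1:ℝ)^a * c) * ((-1)^b * c') < 0 ↔ Odd (a + b) := by
  have hprod : ((-1:ℝ)^a * c) * ((-1)^b * c') = (-1)^(a+b) * (c*c') := by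
    rw [pow_add]; ring
  rw [hprod]
  rcases Nat.even_or_odd (a+b) with h | h
  · rw [h.neg_one_pow, one_mul]
    exact iff_of_false (not_lt.mpr (mul_pos hc hc').le) (Nat.not_odd_iff_even.mpr h)
  · rw [h.neg_one_pow]
    exact iff_of_true (by nlinarith [mul_pos hc hc']) h

noncomputable def subdet {n : ℕ} (A : Matrix (Fin n) (Fin n) ℝ) (k : ℕ) (h : k ≤ n) : ℝ :=
  (A.submatrix (Fin.castLE h) (Fin.castLE h)).det

lemma leadMinor_eq_subdet {n : ℕ} (A : Matrix (Fin n) (Fin n) ℝ) (k : Fin n) :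
    leadMinor A k = subdet A (k+1) k.2 := rfl

lemma subdet_self {n : ℕ} (A : Matrix (Fin n) (Fin n) ℝ) : subdet A n le_rfl = A.det := by
  have h : Fin.castLE (le_refl n) = id := funext fun i => Fin.ext rfl
  rw [subdet, h, Matrix.submatrix_id_id]

lemma subdet_submatrix {n m : ℕ} (h : m ≤ n) (A : Matrix (Fin n) (Fin n) ℝ) (k : ℕ)
    (hk : k ≤ m) :
    subdet (A.submatrix (Fin.castLE h) (Fin.castLE h)) k hk = subdet A k (hk.trans h) := by
  rw [subdet, subdet, Matrix.submatrix_submatrix]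
  congr 1 <;> exact funext fun i => Fin.ext rfl

lemma minorList_decomp {m : ℕ} (A : Matrix (Fin (m+1)) (Fin (m+1)) ℝ) :
    ((1:ℝ) :: List.ofFn fun k : Fin (m+1) => leadMinor A k)
      = ((1:ℝ) :: List.ofFn fun k : Fin m =>
          leadMinor (A.submatrix (Fin.castLE (Nat.le_succ m)) (Fin.castLE (Nat.le_succ m))) k)
        ++ [A.det] := by
  rw [List.ofFn_succ', List.concat_eq_append]
  rfl

lemma getLast_minorList {m : ℕ} (B : Matrix (Fin m) (Fin m) ℝ) (hdB : B.det ≠ 0) :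
    (((1:ℝ) :: List.ofFn fun k : Fin m => leadMinor B k).filter
      fun x => decide (x ≠ 0)).getLast? = some B.det := by
  cases m with
  | zero =>
    have h1 : ((1:ℝ) :: List.ofFn fun k : Fin 0 => leadMinor B k) = [(1:ℝ)] := by simp
    rw [h1]
    have : B.det = 1 := Matrix.det_isEmpty
    rw [this]
    norm_num
  | succ p =>
    rw [minorList_decomp B]
    exact getLast_filter_append _ _ hdB

lemma hz_submatrix {n m : ℕ} (h : m ≤ n) (A : Matrix (Fin n) (Fin n) ℝ)
    (hz : ∀ (k : Fin n) (hk : (k : ℕ) + 1 < n),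
      ¬(leadMinor A k = 0 ∧ leadMinor A ⟨(k : ℕ) + 1, hk⟩ = 0)) :
    ∀ (k : Fin m) (hk : (k : ℕ) + 1 < m),
      ¬(leadMinor (A.submatrix (Fin.castLE h) (Fin.castLE h)) k = 0 ∧
        leadMinor (A.submatrix (Fin.castLE h) (Fin.castLE h)) ⟨(k : ℕ) + 1, hk⟩ = 0) := by
  intro k hk hcon
  have hkn : (k : ℕ) < n := lt_of_lt_of_le (lt_of_lt_of_le k.2 h) le_rfl
  have hkn1 : (k : ℕ) + 1 < n := lt_of_lt_of_le hk h
  apply hz ⟨k, hkn⟩ hkn1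
  constructor
  · rw [leadMinor_eq_subdet] at hcon ⊢
    rw [subdet_submatrix] at hcon
    exact hcon.1
  · rw [leadMinor_eq_subdet] at hcon ⊢
    have := hcon.2
    rw [leadMinor_eq_subdet, subdet_submatrix] at this
    exact this

theorem main_count : ∀ n (A : Matrix (Fin n) (Fin n) ℝ) (hA : A.IsHermitian),
    A.det ≠ 0 →
    (∀ (k : Fin n) (hk : (k : ℕ) + 1 < n),
      ¬(leadMinor A k = 0 ∧ leadMinor A ⟨(k : ℕ) + 1, hk⟩ = 0)) →
    negCount A hA = signChanges ((1:ℝ) :: List.ofFn fun k : Fin n => leadMinor A k) := by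
  intro n
  induction n using Nat.strong_induction_on with
  | _ n ih =>
  cases n with
  | zero =>
    intro A hA hdet hz
    have h1 : negCount A hA = 0 := by simp [negCount]
    have h2 : ((1:ℝ) :: List.ofFn fun k : Fin 0 => leadMinor A k) = [(1:ℝ)] := by simp
    rw [h1, h2]
    norm_num [signChanges]
  | succ m =>
    intro A hA hdet hz
    set B := A.submatrix (Fin.castLE (Nat.le_succ m)) (Fin.castLE (Nat.le_succ m)) with hB
    have hBh : B.IsHermitian := hA.submatrix _
    by_cases hdB : B.det = 0
    · -- singular leading submatrix: m = p + 1 necessarily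
      cases m with
      | zero => exact absurd ((Matrix.det_isEmpty (A := B)) ▸ hdB) one_ne_zero
      | succ p =>
        set C := A.submatrix (Fin.castLE (show p ≤ p + 2 by omega))
          (Fin.castLE (show p ≤ p + 2 by omega)) with hC
        have hCh : C.IsHermitian := hA.submatrix _
        have hdC : C.det ≠ 0 := by
          cases p with
          | zero => rw [show C.det = 1 from Matrix.det_isEmpty]; norm_num
          | succ r =>
            intro hc0
            refine hz ⟨r, by omega⟩ ?_ ⟨hc0, hdB⟩
            simp only [Fin.val_mk]
            omega
        -- counting relations
        have h1 : negCount C hCh ≤ negCount B hBh :=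
          negCount_le_of_le (show p ≤ p + 1 by omega) B hBh
        have h2 : negCount B hBh + p ≤ negCount C hCh + (p+1) :=
          negCount_add_le (show p ≤ p + 1 by omega) B hBh
        have h3 : negCount B hBh ≤ negCount A hA := negCount_le_of_le _ A hA
        have h4 : negCount A hA + (p+1) ≤ negCount B hBh + (p+2) := negCount_add_le _ A hA
        have g1 : posCount C hCh ≤ posCount B hBh :=
          posCount_le_of_le (show p ≤ p + 1 by omega) B hBh
        have g2 : posCount B hBh + p ≤ posCount C hCh + (p+1) :=
          posCount_add_le (show p ≤ p + 1 by omega) B hBh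
        have g3 : posCount B hBh ≤ posCount A hA := posCount_le_of_le _ A hA
        have g4 : posCount A hA + (p+1) ≤ posCount B hBh + (p+2) := posCount_add_le _ A hA
        have h5 : negCount A hA + posCount A hA = p + 2 := count_nonsingular A hA hdet
        have h6 : negCount C hCh + posCount C hCh = p := count_nonsingular C hCh hdC
        have h7 : negCount B hBh + posCount B hBh + 1 ≤ p + 1 := count_singular B hBh hdB
        have hstep : negCount A hA = negCount C hCh + 1 := by omega
        -- sign of det C * det A
        obtain ⟨c, hc, hcd⟩ := det_eq_sign_mul A hA hdet
        obtain ⟨c', hc', hcd'⟩ := det_eq_sign_mul C hCh hdC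
        have hsign : C.det * A.det < 0 := by
          rw [hcd, hcd', prod_sign _ _ _ _ hc' hc]
          rw [hstep, Nat.odd_iff]
          omega
        -- IH for C
        have hIH := ih p (by omega) C hCh hdC (hz_submatrix _ A hz)
        -- list manipulation
        have hLB : ((1:ℝ) :: List.ofFn fun k : Fin (p+1) => leadMinor B k)
            = ((1:ℝ) :: List.ofFn fun k : Fin p => leadMinor C k) ++ [(0:ℝ)] := by
          rw [minorList_decomp B, hdB]
          rfl
        have hLA : ((1:ℝ) :: List.ofFn fun k : Fin (p+2) => leadMinor A k)
            = ((1:ℝ) :: List.ofFn fun k : Fin (p+1) => leadMinor B k) ++ [A.det] := by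
          rw [minorList_decomp A]
        rw [hLA, hLB]
        have hlast : ((((1:ℝ) :: List.ofFn fun k : Fin p => leadMinor C k) ++ [(0:ℝ)]).filter
            fun x => decide (x ≠ 0)).getLast? = some C.det := by
          rw [filter_append_zero]
          exact getLast_minorList C hdC
        rw [signChanges_append_ne _ _ C.det hdet hlast, if_pos hsign,
          signChanges_append_zero, ← hIH, hstep]
    · -- nonsingular leading submatrix
      have hIH := ih m (Nat.lt_succ_self m) B hBh hdB (hz_submatrix _ A hz)
      have h1 : negCount B hBh ≤ negCount A hA := negCount_le_of_le _ A hA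
      have h2 : negCount A hA + m ≤ negCount B hBh + (m+1) := negCount_add_le _ A hA
      obtain ⟨c, hc, hcd⟩ := det_eq_sign_mul A hA hdet
      obtain ⟨c', hc', hcd'⟩ := det_eq_sign_mul B hBh hdB
      have hsign : (B.det * A.det < 0) ↔ Odd (negCount B hBh + negCount A hA) := by
        rw [hcd, hcd']; exact prod_sign _ _ _ _ hc' hc
      rw [minorList_decomp A, ← hB,
        signChanges_append_ne _ _ B.det hdet (getLast_minorList B hdB), ← hIH]
      by_cases hlt : B.det * A.det < 0
      · rw [if_pos hlt]
        have := hsign.mp hlt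
        rw [Nat.odd_iff] at this
        omega
      · rw [if_neg hlt]
        have : ¬ Odd (negCount B hBh + negCount A hA) := fun ho => hlt (hsign.mpr ho)
        rw [Nat.odd_iff] at this
        omega


/-- Jones, 1950: if A is a nonsingular real symmetric matrix
whose leading principal minors D₁,…,D_n have no two consecutive zeros, then the
number of negative eigenvalues of A equals the number of sign changes in the
sequence 1, D₁, …, D_n with zeros deleted. -/
theorem stmt14 (n : ℕ) (A : Matrix (Fin n) (Fin n) ℝ) (hA : A.IsHermitian)
    (hdet : A.det ≠ 0)
    (hz : ∀ (k : Fin n) (hk : (k : ℕ) + 1 < n),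
      ¬(leadMinor A k = 0 ∧ leadMinor A ⟨(k : ℕ) + 1, hk⟩ = 0)) :
    (Finset.univ.filter fun i => hA.eigenvalues i < 0).card
      = signChanges ((1 : ℝ) :: List.ofFn fun k : Fin n => leadMinor A k) := by
  exact main_count n A hA hdet hz
end Main
end

section
/- Let G be a graph built from a neighborhood sequence (as in the CP construction). Then for every k with 2 ≤ k ≤ n, the set W_k ∪ {k} is a clique in G. -/
/-!
Every vertex of `W k` is smaller than `k`, so `k` is adjacent to all of `W k`. Moreover
`W k ⊆ W (k - 1) ∪ {k - 1}`, because the interval part of `W k` starts no earlier than that of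
`W (k - 1)` (non-leaping: `q k ≤ q (k - 1) + 1`) and `a k ∈ W (k - 1)`. Hence by induction `W k`
lies in the clique `W (k - 1) ∪ {k - 1}`, and adding `k` keeps it a clique.
-/

namespace NbhdSeq

variable {n : ℕ} (S : NbhdSeq n)

lemma lt_of_mem_W {k j : ℕ} (hk1 : 1 ≤ k) (hk : k ≤ n) (hj : j ∈ S.W k) : j < k := by
  rcases (show k = 1 ∨ k = 2 ∨ 3 ≤ k by omega) with rfl | rfl | h3
  · simp [S.hW1] at hj
  · rw [S.hW2, Finset.mem_singleton] at hj
    omega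
  · have hq := (S.hq k h3 hk).1
    have ha := (S.hak k h3 hk).2
    rw [S.hWk k h3 hk, Finset.mem_insert, Finset.mem_Icc] at hj
    omega

lemma graph_adj_of_mem_W {k j : ℕ} (hk1 : 1 ≤ k) (hk : k ≤ n) (hj : j ∈ S.W k) :
    S.graph.Adj k j :=
  Or.inr ⟨S.lt_of_mem_W hk1 hk hj, hj⟩

lemma W_subset_insert_W_pred {k : ℕ} (h3 : 3 ≤ k) (hk : k ≤ n) :
    S.W k ⊆ insert (k - 1) (S.W (k - 1)) := by
  intro j hj
  rw [S.hWk k h3 hk, Finset.mem_insert, Finset.mem_Icc] at hj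
  rw [Finset.mem_insert]
  rcases hj with rfl | ⟨hlo, hhi⟩
  · exact Or.inr (S.hak k h3 hk).1
  · by_cases hj : j = k - 1
    · exact Or.inl hj
    have hq := (S.hq k h3 hk).2
    rcases (show k = 3 ∨ 4 ≤ k by omega) with rfl | h4
    · rw [show 3 - 1 = 2 from rfl, S.hq2] at hq
      omega
    · rw [S.hWk (k - 1) (by omega) (by omega), Finset.mem_insert, Finset.mem_Icc]
      omega

lemma isClique_insert_W {k : ℕ} (hk1 : 1 ≤ k) (hk : k ≤ n)
    (h : S.graph.IsClique (S.W k : Set ℕ)) :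
    S.graph.IsClique ((insert k (S.W k) : Finset ℕ) : Set ℕ) := by
  rw [Finset.coe_insert, SimpleGraph.isClique_insert]
  exact ⟨h, fun _ hj _ => S.graph_adj_of_mem_W hk1 hk hj⟩

end NbhdSeq

/-- in the graph of a neighborhood sequence, for every
2 ≤ k ≤ n the set W_k ∪ {k} is a clique. -/
theorem stmt17 {n : ℕ} (S : NbhdSeq n) (k : ℕ) (h2 : 2 ≤ k) (hk : k ≤ n) :
    S.graph.IsClique ((insert k (S.W k) : Finset ℕ) : Set ℕ) := by
  induction k, h2 using Nat.le_induction with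
  | base =>
    refine S.isClique_insert_W (by norm_num) hk ?_
    rw [S.hW2, Finset.coe_singleton]
    exact SimpleGraph.isClique_singleton _
  | succ k hk2 ih =>
    refine S.isClique_insert_W (by omega) hk ((ih (by omega)).subset ?_)
    exact_mod_cast S.W_subset_insert_W_pred (by omega) hk
end
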